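/- Let G be a graph, I a maximum critical independent set, and M a maximum matching of G[L(G)]. Then M(N(I) \ (corona(G) \ ∂_L(G))) ∪ ker(G) ⊆ nucleus(G), where ∂_L(G) = {v ∈ L(G) : N(v) ∩ L^c(G) ≠ ∅}. -/
import Mathlib


open Finset

variable {V : Type*} [Fintype V] [DecidableEq V] (G : SimpleGraph V) [DecidableRel G.Adj]

/-- `N(S)`: the set of vertices adjacent to some vertex of `S`. -/
def nbhd (S : Finset V) : Finset V := S.biUnion (fun v => G.neighborFinset v)

/-- `S` is an independent set of `G`. -/
def Indep (S : Finset V) : Prop := ∀ u ∈ S, ∀ v ∈ S, ¬ G.Adj u v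

/-- The difference `d_G(S) = |S| - |N(S)|`. -/
def diffI (S : Finset V) : ℤ := (S.card : ℤ) - ((nbhd G S).card : ℤ)

/-- `S` is a maximum independent set of `G`. -/
def IsMaxIndep (S : Finset V) : Prop :=
  Indep G S ∧ ∀ T : Finset V, Indep G T → T.card ≤ S.card

/-- `I` is a critical independent set of `G`. -/
def IsCritIndep (I : Finset V) : Prop :=
  Indep G I ∧ ∀ J : Finset V, Indep G J → diffI G J ≤ diffI G I

/-- `I` is a maximum critical independent set of `G`. -/
def IsMaxCritIndep (I : Finset V) : Prop :=
  IsCritIndep G I ∧ ∀ J : Finset V, IsCritIndep G J → J.card ≤ I.card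

/-- `core(G)`: intersection of all maximum independent sets. -/
def core : Set V := {v | ∀ S : Finset V, IsMaxIndep G S → v ∈ S}

/-- `corona(G)`: union of all maximum independent sets. -/
def corona : Set V := {v | ∃ S : Finset V, IsMaxIndep G S ∧ v ∈ S}

/-- `nucleus(G)`: intersection of all maximum critical independent sets. -/
def nucleus : Set V := {v | ∀ S : Finset V, IsMaxCritIndep G S → v ∈ S}

/-- `diadem(G)`: union of all maximum critical independent sets. -/
def diadem : Set V := {v | ∃ S : Finset V, IsMaxCritIndep G S ∧ v ∈ S}

/-- `ker(G)`: intersection of all critical independent sets. -/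
def kerS : Set V := {v | ∀ S : Finset V, IsCritIndep G S → v ∈ S}

/-- A matching of `G`, given as an involution of the vertex set:
unmatched vertices are fixed points, matched vertices are sent to their partner. -/
def IsMatching (M : V → V) : Prop :=
  Function.Involutive M ∧ ∀ v, M v ≠ v → G.Adj v (M v)

/-- Twice the number of edges of the matching `M`, i.e. the number of matched vertices. -/
def matchSize (M : V → V) : ℕ := (univ.filter fun v => M v ≠ v).card

/-- `M` is a maximum matching of `G`. -/
def IsMaxMatching (M : V → V) : Prop :=
  IsMatching G M ∧ ∀ M' : V → V, IsMatching G M' → matchSize M' ≤ matchSize M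

/-- `M` is a matching of the induced subgraph `G[L]`. -/
def IsMatchingOn (L : Finset V) (M : V → V) : Prop :=
  IsMatching G M ∧ ∀ v, M v ≠ v → v ∈ L

/-- `M` is a maximum matching of the induced subgraph `G[L]`. -/
def IsMaxMatchingOn (L : Finset V) (M : V → V) : Prop :=
  IsMatchingOn G L M ∧ ∀ M' : V → V, IsMatchingOn G L M' → matchSize M' ≤ matchSize M

/-- `S` is a maximum independent set of the induced subgraph `G[L]`. -/
def IsMaxIndepOn (L : Finset V) (S : Finset V) : Prop :=
  S ⊆ L ∧ Indep G S ∧ ∀ T : Finset V, T ⊆ L → Indep G T → T.card ≤ S.card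

/-- `core` of the induced subgraph `G[L]`. -/
def coreOn (L : Finset V) : Set V := {v | ∀ S : Finset V, IsMaxIndepOn G L S → v ∈ S}

/-- `D(G[L])`: vertices of `L` missed by some maximum matching of `G[L]`. -/
def Dset (L : Finset V) : Set V := {v | v ∈ L ∧ ∃ M : V → V, IsMaxMatchingOn G L M ∧ M v = v}

/-- The Larson boundary `∂_L(G)` of the set `L`. -/
def boundaryL (L : Finset V) : Set V := {v | v ∈ L ∧ ∃ w, w ∉ L ∧ G.Adj v w}

/-- The critical difference `d(G)`. -/
noncomputable def critDiff : ℤ := sSup {d : ℤ | ∃ X : Finset V, diffI G X = d}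

/-- The difference of `S` computed in the induced subgraph `G[L]`. -/
def diffOn (L : Finset V) (S : Finset V) : ℤ := (S.card : ℤ) - ((nbhd G S ∩ L).card : ℤ)

/-- The critical difference of the induced subgraph `G[L]`. -/
noncomputable def critDiffOn (L : Finset V) : ℤ := sSup {d : ℤ | ∃ X : Finset V, X ⊆ L ∧ diffOn G L X = d}

/-- `G` is a König–Egerváry graph: `α(G) + μ(G) = |V(G)|`. -/
def KonigEgervary : Prop :=
  ∃ (S : Finset V) (M : V → V), IsMaxIndep G S ∧ IsMaxMatching G M ∧
    2 * S.card + matchSize M = 2 * Fintype.card V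
section Aux

lemma mem_nbhd {S : Finset V} {w : V} : w ∈ nbhd G S ↔ ∃ v ∈ S, G.Adj v w := by
  simp [nbhd]

lemma nbhd_union (S T : Finset V) : nbhd G (S ∪ T) = nbhd G S ∪ nbhd G T := by
  ext w
  simp only [mem_nbhd, Finset.mem_union]
  constructor
  · rintro ⟨v, hv | hv, ha⟩
    · exact Or.inl ⟨v, hv, ha⟩
    · exact Or.inr ⟨v, hv, ha⟩
  · rintro (⟨v, hv, ha⟩ | ⟨v, hv, ha⟩)
    · exact ⟨v, Or.inl hv, ha⟩
    · exact ⟨v, Or.inr hv, ha⟩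

lemma nbhd_mono {S T : Finset V} (h : S ⊆ T) : nbhd G S ⊆ nbhd G T := by
  intro w hw
  obtain ⟨v, hv, ha⟩ := (mem_nbhd G).1 hw
  exact (mem_nbhd G).2 ⟨v, h hv, ha⟩

lemma indep_disjoint_nbhd {K : Finset V} (hK : Indep G K) : Disjoint K (nbhd G K) := by
  rw [Finset.disjoint_left]
  intro a ha han
  obtain ⟨u, hu, hadj⟩ := (mem_nbhd G).1 han
  exact hK u hu a ha hadj

lemma indep_sdiff_nbhd (X : Finset V) : Indep G (X \ nbhd G X) := by
  intro u hu v hv ha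
  rw [Finset.mem_sdiff] at hu hv
  exact hv.2 ((mem_nbhd G).2 ⟨u, hu.1, ha⟩)

lemma diffI_le_of_crit {K : Finset V} (hK : IsCritIndep G K) (X : Finset V) :
    diffI G X ≤ diffI G K := by
  have hYI : Indep G (X \ nbhd G X) := indep_sdiff_nbhd G X
  have h1 : nbhd G (X \ nbhd G X) ⊆ nbhd G X \ X := by
    intro w hw
    obtain ⟨y, hy, ha⟩ := (mem_nbhd G).1 hw
    rw [Finset.mem_sdiff] at hy
    exact Finset.mem_sdiff.2 ⟨(mem_nbhd G).2 ⟨y, hy.1, ha⟩,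
      fun hwX => hy.2 ((mem_nbhd G).2 ⟨w, hwX, ha.symm⟩)⟩
  have c1 : (X \ nbhd G X).card + (X ∩ nbhd G X).card = X.card :=
    Finset.card_sdiff_add_card_inter _ _
  have c2 : (nbhd G (X \ nbhd G X)).card ≤ (nbhd G X \ X).card := Finset.card_le_card h1
  have c3 : (nbhd G X \ X).card + (nbhd G X ∩ X).card = (nbhd G X).card :=
    Finset.card_sdiff_add_card_inter _ _
  have c4 : (X ∩ nbhd G X).card = (nbhd G X ∩ X).card := by rw [Finset.inter_comm]
  have hd := hK.2 _ hYI
  simp only [diffI] at hd ⊢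
  omega

lemma hall_cond {K : Finset V} (hK : IsCritIndep G K) (Y : Finset V) (hY : Y ⊆ nbhd G K) :
    Y.card ≤ (nbhd G Y ∩ K).card := by
  have hJI : Indep G (K \ nbhd G Y) := fun u hu v hv =>
    hK.1 u (Finset.mem_sdiff.1 hu).1 v (Finset.mem_sdiff.1 hv).1
  have hNJ : nbhd G (K \ nbhd G Y) ⊆ nbhd G K \ Y := by
    intro w hw
    obtain ⟨j, hj, ha⟩ := (mem_nbhd G).1 hw
    rw [Finset.mem_sdiff] at hj
    exact Finset.mem_sdiff.2 ⟨(mem_nbhd G).2 ⟨j, hj.1, ha⟩,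
      fun hwY => hj.2 ((mem_nbhd G).2 ⟨w, hwY, ha.symm⟩)⟩
  have hd := hK.2 _ hJI
  have c1 : (K \ nbhd G Y).card + (K ∩ nbhd G Y).card = K.card :=
    Finset.card_sdiff_add_card_inter _ _
  have c2 : (nbhd G (K \ nbhd G Y)).card ≤ (nbhd G K \ Y).card := Finset.card_le_card hNJ
  have c3 : (nbhd G K \ Y).card + Y.card = (nbhd G K).card := by
    rw [Finset.card_sdiff_of_subset hY]
    have := Finset.card_le_card hY
    omega
  have c4 : (nbhd G Y ∩ K).card = (K ∩ nbhd G Y).card := by rw [Finset.inter_comm]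
  simp only [diffI] at hd
  omega

lemma exists_hall {K : Finset V} (hK : IsCritIndep G K) :
    ∃ f : V → V, Set.InjOn f ↑(nbhd G K) ∧ ∀ w ∈ nbhd G K, f w ∈ K ∧ G.Adj w (f w) := by
  classical
  have main : ∀ s : Finset {x // x ∈ nbhd G K},
      s.card ≤ (s.biUnion fun w => G.neighborFinset (w : V) ∩ K).card := by
    intro s
    have hsub : s.image Subtype.val ⊆ nbhd G K := by
      intro x hx
      obtain ⟨w, _, rfl⟩ := Finset.mem_image.1 hx
      exact w.2
    have heq : s.biUnion (fun w => G.neighborFinset (w : V) ∩ K)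
        = nbhd G (s.image Subtype.val) ∩ K := by
      ext x
      simp only [Finset.mem_biUnion, Finset.mem_inter, SimpleGraph.mem_neighborFinset,
        mem_nbhd, Finset.mem_image]
      constructor
      · rintro ⟨w, hw, hadj, hxK⟩
        exact ⟨⟨w, ⟨w, hw, rfl⟩, hadj⟩, hxK⟩
      · rintro ⟨⟨v, ⟨w, hw, rfl⟩, hadj⟩, hxK⟩
        exact ⟨w, hw, hadj, hxK⟩
    calc s.card = (s.image Subtype.val).card :=
          (Finset.card_image_of_injective _ Subtype.val_injective).symm
      _ ≤ (nbhd G (s.image Subtype.val) ∩ K).card := hall_cond G hK _ hsub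
      _ = _ := by rw [heq]
  obtain ⟨f0, hinj, hmem⟩ := (Finset.all_card_le_biUnion_card_iff_exists_injective _).1 main
  refine ⟨fun v => if h : v ∈ nbhd G K then f0 ⟨v, h⟩ else v, ?_, ?_⟩
  · intro v1 h1 v2 h2 heq'
    rw [Finset.mem_coe] at h1 h2
    dsimp only at heq'
    rw [dif_pos h1, dif_pos h2] at heq'
    exact Subtype.mk_eq_mk.1 (hinj heq')
  · intro w hw
    dsimp only
    rw [dif_pos hw]
    have h := hmem ⟨w, hw⟩
    rw [Finset.mem_inter, SimpleGraph.mem_neighborFinset] at h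
    exact ⟨h.2, h.1⟩

lemma indep_card_le_of_crit {K W : Finset V} (hK : IsCritIndep G K) (hW : Indep G W)
    (hWL : W ⊆ K ∪ nbhd G K) : W.card ≤ K.card := by
  classical
  obtain ⟨f, finj, fmem⟩ := exists_hall G hK
  have hdisj := indep_disjoint_nbhd G hK.1
  have hsplit : (W ∩ K).card + (W ∩ nbhd G K).card = W.card := by
    rw [← Finset.card_union_of_disjoint
        (hdisj.mono Finset.inter_subset_right Finset.inter_subset_right),
      ← Finset.inter_union_distrib_left, Finset.inter_eq_left.2 hWL]
  have hmaps : ∀ w ∈ W ∩ nbhd G K, f w ∈ K \ W := by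
    intro w hw
    rw [Finset.mem_inter] at hw
    obtain ⟨h1, h2⟩ := fmem w hw.2
    exact Finset.mem_sdiff.2 ⟨h1, fun hfW => hW w hw.1 (f w) hfW h2⟩
  have hle : (W ∩ nbhd G K).card ≤ (K \ W).card :=
    Finset.card_le_card_of_injOn f hmaps
      (finj.mono (fun x hx => Finset.mem_coe.2 (Finset.mem_inter.1 (Finset.mem_coe.1 hx)).2))
  have h2 : (K ∩ W).card + (K \ W).card = K.card := by
    have := Finset.card_sdiff_add_card_inter K W
    omega
  have h3 : (W ∩ K).card = (K ∩ W).card := by rw [Finset.inter_comm]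
  omega

end Aux
section Aux2

lemma hmap_spec {K : Finset V} (hKi : Indep G K) {M : V → V}
    (hM : IsMatchingOn G (K ∪ nbhd G K) M) :
    ∀ v, M v ≠ v → (if v ∈ nbhd G K then v else M v) ∈ nbhd G K := by
  intro v hv
  by_cases h : v ∈ nbhd G K
  · rwa [if_pos h]
  · rw [if_neg h]
    have hvL := hM.2 v hv
    have hvK : v ∈ K := by
      rcases Finset.mem_union.1 hvL with h' | h'
      · exact h'
      · exact absurd h' h
    have hMvL : M v ∈ K ∪ nbhd G K := by
      apply hM.2
      rw [hM.1.1 v]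
      exact fun h' => hv h'.symm
    rcases Finset.mem_union.1 hMvL with h' | h'
    · exact absurd (hM.1.2 v hv) (hKi v hvK (M v) h')
    · exact h'

lemma matchSize_le_two_mul {K : Finset V} {M : V → V} (hMinv : Function.Involutive M)
    (B : Finset V) (hB : ∀ v, M v ≠ v → (if v ∈ nbhd G K then v else M v) ∈ B) :
    matchSize M ≤ 2 * B.card := by
  classical
  unfold matchSize
  apply Finset.card_le_mul_card_image_of_maps_to
    (f := fun v => if v ∈ nbhd G K then v else M v)
  · intro a ha
    exact hB a (Finset.mem_filter.1 ha).2
  · intro b _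
    refine (Finset.card_le_card (t := {b, M b}) ?_).trans ?_
    · intro v hv
      rw [Finset.mem_filter] at hv
      obtain ⟨_, hv2⟩ := hv
      by_cases h : v ∈ nbhd G K
      · rw [if_pos h] at hv2
        simp [hv2]
      · rw [if_neg h] at hv2
        have : v = M b := by rw [← hv2, hMinv v]
        simp [this]
    · exact (Finset.card_insert_le _ _).trans (by simp)

lemma matchSize_le {K : Finset V} (hKi : Indep G K) {M : V → V}
    (hM : IsMatchingOn G (K ∪ nbhd G K) M) : matchSize M ≤ 2 * (nbhd G K).card :=
  matchSize_le_two_mul G hM.1.1 _ (hmap_spec G hKi hM)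

lemma exists_good_matching {K : Finset V} (hK : IsCritIndep G K) :
    ∃ M₀ : V → V, IsMatchingOn G (K ∪ nbhd G K) M₀ ∧ matchSize M₀ = 2 * (nbhd G K).card := by
  classical
  obtain ⟨f, finj, fmem⟩ := exists_hall G hK
  have hdisj := indep_disjoint_nbhd G hK.1
  set M₀ : V → V := fun v =>
    if hv : v ∈ nbhd G K then f v
    else if hv2 : ∃ w ∈ nbhd G K, f w = v then hv2.choose else v with hM₀
  have e1 : ∀ v ∈ nbhd G K, M₀ v = f v := by
    intro v hv; simp only [hM₀]; rw [dif_pos hv]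
  have e2 : ∀ v, v ∉ nbhd G K → ∀ (hex : ∃ w ∈ nbhd G K, f w = v),
      M₀ v = hex.choose := by
    intro v hv hex; simp only [hM₀]; rw [dif_neg hv, dif_pos hex]
  have e3 : ∀ v, v ∉ nbhd G K → ¬ (∃ w ∈ nbhd G K, f w = v) → M₀ v = v := by
    intro v hv hv2; simp only [hM₀]; rw [dif_neg hv, dif_neg hv2]
  have hfK : ∀ w ∈ nbhd G K, f w ∈ K := fun w hw => (fmem w hw).1
  have hfnb : ∀ w ∈ nbhd G K, f w ∉ nbhd G K :=
    fun w hw h => Finset.disjoint_left.1 hdisj (hfK w hw) h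
  have hinv : Function.Involutive M₀ := by
    intro v
    by_cases hv : v ∈ nbhd G K
    · rw [e1 v hv]
      have hex : ∃ w ∈ nbhd G K, f w = f v := ⟨v, hv, rfl⟩
      rw [e2 _ (hfnb v hv) hex]
      exact finj (Finset.mem_coe.2 hex.choose_spec.1) (Finset.mem_coe.2 hv) hex.choose_spec.2
    · by_cases hv2 : ∃ w ∈ nbhd G K, f w = v
      · rw [e2 v hv hv2, e1 _ hv2.choose_spec.1, hv2.choose_spec.2]
      · rw [e3 v hv hv2, e3 v hv hv2]
  have hmatchedL : ∀ v, M₀ v ≠ v → v ∈ K ∪ nbhd G K := by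
    intro v hne
    by_cases hv : v ∈ nbhd G K
    · exact Finset.mem_union_right _ hv
    · by_cases hv2 : ∃ w ∈ nbhd G K, f w = v
      · exact Finset.mem_union_left _ (hv2.choose_spec.2 ▸ hfK _ hv2.choose_spec.1)
      · exact absurd (e3 v hv hv2) hne
  have hadj : ∀ v, M₀ v ≠ v → G.Adj v (M₀ v) := by
    intro v hne
    by_cases hv : v ∈ nbhd G K
    · rw [e1 v hv]; exact (fmem v hv).2
    · by_cases hv2 : ∃ w ∈ nbhd G K, f w = v
      · rw [e2 v hv hv2]
        have h := (fmem _ hv2.choose_spec.1).2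
        rw [hv2.choose_spec.2] at h
        exact h.symm
      · exact absurd (e3 v hv hv2) hne
  refine ⟨M₀, ⟨⟨hinv, hadj⟩, hmatchedL⟩, ?_⟩
  have hset : (Finset.univ.filter fun v => M₀ v ≠ v) = nbhd G K ∪ (nbhd G K).image f := by
    ext v
    simp only [Finset.mem_filter, Finset.mem_univ, true_and, Finset.mem_union, Finset.mem_image]
    constructor
    · intro hne
      by_cases hv : v ∈ nbhd G K
      · exact Or.inl hv
      · by_cases hv2 : ∃ w ∈ nbhd G K, f w = v
        · exact Or.inr hv2
        · exact absurd (e3 v hv hv2) hne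
    · intro h
      rcases h with hv | ⟨w, hw, rfl⟩
      · rw [e1 v hv]
        intro h
        exact Finset.disjoint_left.1 hdisj (h ▸ hfK v hv) hv
      · have hex : ∃ w' ∈ nbhd G K, f w' = f w := ⟨w, hw, rfl⟩
        rw [e2 _ (hfnb w hw) hex]
        intro h
        exact hfnb w hw (h ▸ hex.choose_spec.1)
  have himgK : (nbhd G K).image f ⊆ K := by
    intro x hx
    obtain ⟨w, hw, rfl⟩ := Finset.mem_image.1 hx
    exact hfK w hw
  unfold matchSize
  rw [hset, Finset.card_union_of_disjoint
      (Finset.disjoint_left.2 fun a ha hb => Finset.disjoint_left.1 hdisj (himgK hb) ha),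
    Finset.card_image_of_injOn finj]
  omega

lemma matching_partner {K : Finset V} (hK : IsCritIndep G K) {M : V → V}
    (hM : IsMaxMatchingOn G (K ∪ nbhd G K) M) : ∀ u ∈ nbhd G K, M u ∈ K := by
  classical
  obtain ⟨M₀, hM₀, hM₀size⟩ := exists_good_matching G hK
  have hsz : matchSize M = 2 * (nbhd G K).card :=
    le_antisymm (matchSize_le G hK.1 hM.1) (hM₀size ▸ hM.2 M₀ hM₀)
  have hdisj := indep_disjoint_nbhd G hK.1
  have hmatched : ∀ u ∈ nbhd G K, M u ≠ u := by
    intro u hu hmu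
    have hbB : ∀ v, M v ≠ v → (if v ∈ nbhd G K then v else M v) ∈ (nbhd G K).erase u := by
      intro v hv
      have h1 := hmap_spec G hK.1 hM.1 v hv
      rw [Finset.mem_erase]
      refine ⟨?_, h1⟩
      by_cases h : v ∈ nbhd G K
      · rw [if_pos h]
        intro hvu
        exact hv (by rw [hvu, hmu, ← hvu])
      · rw [if_neg h]
        intro hvu
        have : v = M u := by rw [← hvu, hM.1.1.1 v]
        rw [hmu] at this
        exact h (this ▸ hu)
    have hle := matchSize_le_two_mul G hM.1.1.1 _ hbB
    rw [Finset.card_erase_of_mem hu] at hle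
    have hpos : 1 ≤ (nbhd G K).card := Finset.card_pos.2 ⟨u, hu⟩
    omega
  intro u hu
  have hmu := hmatched u hu
  have hMuL : M u ∈ K ∪ nbhd G K :=
    hM.1.2 (M u) (by rw [hM.1.1.1 u]; exact fun h => hmu h.symm)
  rcases Finset.mem_union.1 hMuL with h | h
  · exact h
  · exfalso
    set S := Finset.univ.filter fun v => M v ≠ v with hS
    have hS2 : S.card = 2 * (nbhd G K).card := hsz
    have hsub : nbhd G K ⊆ S := by
      intro w hw
      exact Finset.mem_filter.2 ⟨Finset.mem_univ _, hmatched w hw⟩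
    have hmaps : ∀ v ∈ S \ nbhd G K, M v ∈ (nbhd G K).erase u := by
      intro v hv
      rw [Finset.mem_sdiff] at hv
      obtain ⟨hvS, hvnb⟩ := hv
      have hvne : M v ≠ v := (Finset.mem_filter.1 hvS).2
      have hvL := hM.1.2 v hvne
      have hvK : v ∈ K := by
        rcases Finset.mem_union.1 hvL with h' | h'
        · exact h'
        · exact absurd h' hvnb
      have hMvL : M v ∈ K ∪ nbhd G K := by
        apply hM.1.2
        rw [hM.1.1.1 v]
        exact fun h' => hvne h'.symm
      have hMvnb : M v ∈ nbhd G K := by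
        rcases Finset.mem_union.1 hMvL with h' | h'
        · exact absurd (hM.1.1.2 v hvne) (hK.1 v hvK (M v) h')
        · exact h'
      rw [Finset.mem_erase]
      refine ⟨?_, hMvnb⟩
      intro hvu
      have : v = M u := by rw [← hvu, hM.1.1.1 v]
      exact hvnb (this ▸ h)
    have hinjcard : (S \ nbhd G K).card ≤ ((nbhd G K).erase u).card :=
      Finset.card_le_card_of_injOn M hmaps
        (fun a _ b _ hab => hM.1.1.1.injective hab)
    have hsplit : (S \ nbhd G K).card + (nbhd G K).card = S.card := by
      rw [Finset.card_sdiff_of_subset hsub]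
      have := Finset.card_le_card hsub
      omega
    rw [Finset.card_erase_of_mem hu] at hinjcard
    have hpos : 1 ≤ (nbhd G K).card := Finset.card_pos.2 ⟨u, hu⟩
    omega

end Aux2
section Aux3

lemma L_unique {A B : Finset V} (hA : IsMaxCritIndep G A) (hB : IsMaxCritIndep G B) :
    B ∪ nbhd G B ⊆ A ∪ nbhd G A := by
  classical
  obtain ⟨f, finj, fmem⟩ := exists_hall G hA.1
  have hdA := indep_disjoint_nbhd G hA.1.1
  have hcardAB : A.card = B.card := le_antisymm (hB.2 A hA.1) (hA.2 B hB.1)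
  have hdiffAB : diffI G A = diffI G B := le_antisymm (hB.1.2 A hA.1.1) (hA.1.2 B hB.1.1)
  have e1 : (A ∪ B).card + (A ∩ B).card = A.card + B.card := Finset.card_union_add_card_inter _ _
  have e2 : (nbhd G A ∪ nbhd G B).card + (nbhd G A ∩ nbhd G B).card
      = (nbhd G A).card + (nbhd G B).card := Finset.card_union_add_card_inter _ _
  have e3 : nbhd G (A ∪ B) = nbhd G A ∪ nbhd G B := nbhd_union G _ _
  have e4c : (nbhd G (A ∩ B)).card ≤ (nbhd G A ∩ nbhd G B).card :=
    Finset.card_le_card (Finset.subset_inter (nbhd_mono G Finset.inter_subset_left)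
      (nbhd_mono G Finset.inter_subset_right))
  have dU : diffI G (A ∪ B) ≤ diffI G A := diffI_le_of_crit G hA.1 _
  have dI : diffI G (A ∩ B) ≤ diffI G A := diffI_le_of_crit G hA.1 _
  have dsum : diffI G A + diffI G B ≤ diffI G (A ∪ B) + diffI G (A ∩ B) := by
    simp only [diffI]
    rw [e3]
    omega
  have dUeq : diffI G (A ∪ B) = diffI G A := by omega
  have hNABcard : ((nbhd G A ∩ nbhd G B).card : ℤ)
      = (A ∩ B).card - ((A.card : ℤ) - (nbhd G A).card) := by
    simp only [diffI] at dUeq hdiffAB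
    rw [e3] at dUeq
    omega
  have pB : B.card = (A ∩ B).card + (B ∩ nbhd G A).card + (B \ (A ∪ nbhd G A)).card := by
    have q1 : (B ∩ (A ∪ nbhd G A)).card + (B \ (A ∪ nbhd G A)).card = B.card :=
      Finset.card_inter_add_card_sdiff _ _
    have q2 : B ∩ (A ∪ nbhd G A) = (B ∩ A) ∪ (B ∩ nbhd G A) :=
      Finset.inter_union_distrib_left _ _ _
    have q3 : Disjoint (B ∩ A) (B ∩ nbhd G A) :=
      hdA.mono Finset.inter_subset_right Finset.inter_subset_right
    have q4 : (B ∩ A).card = (A ∩ B).card := by rw [Finset.inter_comm]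
    rw [q2, Finset.card_union_of_disjoint q3, q4] at q1
    omega
  have hinjBA : Set.InjOn f ↑(B ∩ nbhd G A) :=
    finj.mono (fun x hx => Finset.mem_coe.2 (Finset.mem_inter.1 (Finset.mem_coe.1 hx)).2)
  have himg : ∀ b ∈ B ∩ nbhd G A, f b ∈ (nbhd G B \ nbhd G A) \ nbhd G (B \ (A ∪ nbhd G A)) := by
    intro b hb
    rw [Finset.mem_inter] at hb
    obtain ⟨hfK, hadj⟩ := fmem b hb.2
    refine Finset.mem_sdiff.2 ⟨Finset.mem_sdiff.2 ⟨(mem_nbhd G).2 ⟨b, hb.1, hadj⟩, ?_⟩, ?_⟩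
    · exact fun h => Finset.disjoint_left.1 hdA hfK h
    · intro h
      obtain ⟨b'', hb'', hadj''⟩ := (mem_nbhd G).1 h
      rw [Finset.mem_sdiff] at hb''
      exact hb''.2 (Finset.mem_union_right _ ((mem_nbhd G).2 ⟨f b, hfK, hadj''.symm⟩))
  have r1 : (B ∩ nbhd G A).card ≤ ((nbhd G B \ nbhd G A) \ nbhd G (B \ (A ∪ nbhd G A))).card :=
    Finset.card_le_card_of_injOn f himg hinjBA
  have r3 : (nbhd G (B \ (A ∪ nbhd G A)) \ nbhd G A).card + ((nbhd G B \ nbhd G A) \ nbhd G (B \ (A ∪ nbhd G A))).card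
      ≤ (nbhd G B \ nbhd G A).card := by
    rw [← Finset.card_union_of_disjoint (Finset.disjoint_left.2
      fun x hx hx2 => (Finset.mem_sdiff.1 hx2).2 (Finset.mem_sdiff.1 hx).1)]
    apply Finset.card_le_card
    intro x hx
    rcases Finset.mem_union.1 hx with h | h
    · rw [Finset.mem_sdiff] at h ⊢
      exact ⟨nbhd_mono G Finset.sdiff_subset h.1, h.2⟩
    · exact (Finset.mem_sdiff.1 h).1
  have r4 : (nbhd G B \ nbhd G A).card + (nbhd G B ∩ nbhd G A).card = (nbhd G B).card :=
    Finset.card_sdiff_add_card_inter _ _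
  have rc : (nbhd G B ∩ nbhd G A).card = (nbhd G A ∩ nbhd G B).card := by
    rw [Finset.inter_comm]
  -- Y = A ∪ (B \ (A ∪ nbhd G A)) is critical independent
  have hYindep : Indep G (A ∪ (B \ (A ∪ nbhd G A))) := by
    intro u hu v hv hadj
    rw [Finset.mem_union] at hu hv
    rcases hu with hu | hu <;> rcases hv with hv | hv
    · exact hA.1.1 u hu v hv hadj
    · exact (Finset.mem_sdiff.1 hv).2 (Finset.mem_union_right _ ((mem_nbhd G).2 ⟨u, hu, hadj⟩))
    · exact (Finset.mem_sdiff.1 hu).2 (Finset.mem_union_right _ ((mem_nbhd G).2 ⟨v, hv, hadj.symm⟩))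
    · exact hB.1.1 u (Finset.mem_sdiff.1 hu).1 v (Finset.mem_sdiff.1 hv).1 hadj
  have hYcard : (A ∪ (B \ (A ∪ nbhd G A))).card = A.card + (B \ (A ∪ nbhd G A)).card := by
    apply Finset.card_union_of_disjoint
    rw [Finset.disjoint_left]
    intro a ha hab
    exact (Finset.mem_sdiff.1 hab).2 (Finset.mem_union_left _ ha)
  have hNY : (nbhd G (A ∪ (B \ (A ∪ nbhd G A)))).card ≤ (nbhd G A).card + (nbhd G (B \ (A ∪ nbhd G A)) \ nbhd G A).card := by
    rw [nbhd_union, ← Finset.union_sdiff_self_eq_union]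
    exact le_of_eq (Finset.card_union_of_disjoint Finset.disjoint_sdiff)
  have hdY : diffI G A ≤ diffI G (A ∪ (B \ (A ∪ nbhd G A))) := by
    simp only [diffI] at hdiffAB ⊢
    omega
  have hYcrit : IsCritIndep G (A ∪ (B \ (A ∪ nbhd G A))) :=
    ⟨hYindep, fun J hJ => (hA.1.2 J hJ).trans hdY⟩
  have hYle : (A ∪ (B \ (A ∪ nbhd G A))).card ≤ A.card := hA.2 _ hYcrit
  have hB0 : (B \ (A ∪ nbhd G A)).card = 0 := by omega
  have hBsub : B ⊆ A ∪ nbhd G A := by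
    intro b hb
    by_contra hcon
    have hmem : b ∈ (B \ (A ∪ nbhd G A)) := Finset.mem_sdiff.2 ⟨hb, hcon⟩
    rw [Finset.card_eq_zero.1 hB0] at hmem
    exact Finset.notMem_empty b hmem
  -- stage 2: nbhd G B ⊆ A ∪ nbhd G A
  have hT : (B ∩ nbhd G A).image f = nbhd G B \ nbhd G A := by
    apply Finset.eq_of_subset_of_card_le
    · intro x hx
      obtain ⟨b, hb, rfl⟩ := Finset.mem_image.1 hx
      exact (Finset.mem_sdiff.1 (himg b hb)).1
    · have himgcard : ((B ∩ nbhd G A).image f).card = (B ∩ nbhd G A).card :=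
        Finset.card_image_of_injOn hinjBA
      simp only [diffI] at hdiffAB
      omega
  have hTA : nbhd G B \ nbhd G A ⊆ A := by
    rw [← hT]
    intro x hx
    obtain ⟨b, hb, rfl⟩ := Finset.mem_image.1 hx
    exact (fmem b (Finset.mem_inter.1 hb).2).1
  intro w hw
  rcases Finset.mem_union.1 hw with hw | hw
  · exact hBsub hw
  · by_cases h : w ∈ nbhd G A
    · exact Finset.mem_union_right _ h
    · exact Finset.mem_union_left _ (hTA (Finset.mem_sdiff.2 ⟨hw, h⟩))

lemma crit_in_corona {A : Finset V} (hA : IsCritIndep G A) {v : V} (hv : v ∈ A) :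
    v ∈ corona G := by
  classical
  obtain ⟨T, hT, hTmax⟩ := Finset.exists_max_image
    ((Finset.univ \ (A ∪ nbhd G A)).powerset.filter fun T => Indep G T) Finset.card
    ⟨∅, Finset.mem_filter.2 ⟨Finset.empty_mem_powerset _,
      fun u hu => absurd hu (Finset.notMem_empty u)⟩⟩
  rw [Finset.mem_filter, Finset.mem_powerset] at hT
  obtain ⟨hTsub, hTindep⟩ := hT
  have hdisjAT : Disjoint A T := by
    rw [Finset.disjoint_left]
    intro a ha hat
    have h := hTsub hat
    rw [Finset.mem_sdiff] at h
    exact h.2 (Finset.mem_union_left _ ha)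
  have hTnb : ∀ t ∈ T, t ∉ nbhd G A := by
    intro t ht h
    have h2 := hTsub ht
    rw [Finset.mem_sdiff] at h2
    exact h2.2 (Finset.mem_union_right _ h)
  refine ⟨A ∪ T, ⟨⟨?_, ?_⟩, Finset.mem_union_left _ hv⟩⟩
  · intro u hu w hw hadj
    rcases Finset.mem_union.1 hu with hu | hu <;> rcases Finset.mem_union.1 hw with hw | hw
    · exact hA.1 u hu w hw hadj
    · exact hTnb w hw ((mem_nbhd G).2 ⟨u, hu, hadj⟩)
    · exact hTnb u hu ((mem_nbhd G).2 ⟨w, hw, hadj.symm⟩)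
    · exact hTindep u hu w hw hadj
  · intro W hW
    have h1 : (W ∩ (A ∪ nbhd G A)).card ≤ A.card := by
      apply indep_card_le_of_crit G hA
      · exact fun u hu w hw hadj =>
          hW u (Finset.mem_inter.1 hu).1 w (Finset.mem_inter.1 hw).1 hadj
      · exact Finset.inter_subset_right
    have h2 : (W \ (A ∪ nbhd G A)).card ≤ T.card := by
      apply hTmax
      rw [Finset.mem_filter, Finset.mem_powerset]
      exact ⟨fun x hx => Finset.mem_sdiff.2 ⟨Finset.mem_univ x, (Finset.mem_sdiff.1 hx).2⟩,
        fun u hu w hw hadj => hW u (Finset.mem_sdiff.1 hu).1 w (Finset.mem_sdiff.1 hw).1 hadj⟩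
    have h3 : (W ∩ (A ∪ nbhd G A)).card + (W \ (A ∪ nbhd G A)).card = W.card :=
      Finset.card_inter_add_card_sdiff _ _
    have h4 : (A ∪ T).card = A.card + T.card := Finset.card_union_of_disjoint hdisjAT
    omega

end Aux3

theorem stmt11 (I : Finset V) (hI : IsMaxCritIndep G I) (M : V → V)
    (hM : IsMaxMatchingOn G (I ∪ nbhd G I) M) :
    M '' (↑(nbhd G I) \ (corona G \ boundaryL G (I ∪ nbhd G I))) ∪ kerS G ⊆ nucleus G := by
  classical
  rintro x hx
  simp only [nucleus, Set.mem_setOf_eq]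
  intro A hA
  rcases hx with hx | hx
  · obtain ⟨v, hv, rfl⟩ := hx
    rw [Set.mem_diff] at hv
    obtain ⟨hvN, hvc⟩ := hv
    have hvN' : v ∈ nbhd G I := Finset.mem_coe.1 hvN
    have hLeq : A ∪ nbhd G A = I ∪ nbhd G I :=
      Finset.Subset.antisymm (L_unique G hI hA) (L_unique G hA hI)
    have hM' : IsMaxMatchingOn G (A ∪ nbhd G A) M := by rw [hLeq]; exact hM
    by_cases hvA : v ∈ nbhd G A
    · exact matching_partner G hA.1 hM' v hvA
    · have hvL : v ∈ A ∪ nbhd G A := by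
        rw [hLeq]; exact Finset.mem_union_right _ hvN'
      have hvA' : v ∈ A := by
        rcases Finset.mem_union.1 hvL with h | h
        · exact h
        · exact absurd h hvA
      exfalso
      by_cases hbd : v ∈ boundaryL G (I ∪ nbhd G I)
      · obtain ⟨-, w, hwL, hadj⟩ := hbd
        apply hwL
        rw [← hLeq]
        exact Finset.mem_union_right _ ((mem_nbhd G).2 ⟨v, hvA', hadj⟩)
      · exact hvc ⟨crit_in_corona G hA.1 hvA', hbd⟩
  · exact hx A hA.1
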